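/- Let q = p^n, t | s, c ∈ F_{q^t}^×, and F : F_{q^s} → F_{q^s}. Let u, v ∈ F_{q^s} with Tr_{F_{q^s}/F_{q^t}}(−uv) ≠ 1, and define G(x) = F(x) + u·Tr_{F_{q^s}/F_{q^t}}(vF(x)). Then the map h(x) = x + u·Tr_{F_{q^s}/F_{q^t}}(vx) is an F_{q^t}-linear permutation of F_{q^s}, and G = h ∘ F has the same cc-differential uniformity as F; in particular, if F is PccN then so is G. -/

import Mathlib

/-!
The map `h(x) = x + u·Tr(vx)` is `F_{q^t}`-linear, and `h(x) = 0` forces `x = -u·τ` with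
`τ = Tr(vx) = τ·Tr(-uv)`, so `τ = 0` and `x = 0`; hence `h` is a bijection of the finite field.
An additive bijection commuting with multiplication by `c` carries the solutions of
`F(cx + a) - cF(x) = b` exactly onto those of `G(cx + a) - cG(x) = h(b)`, so `F` and `G = h ∘ F`
have the same set of cc-differential counts.
-/

open Function

section TraceTwist

variable (T : Type*) {E : Type*} [Field T] [CommRing E] [Algebra T E]

noncomputable def traceTwist (u v : E) : E →ₗ[T] E :=
  LinearMap.id + (Algebra.trace T E ∘ₗ LinearMap.mulLeft T v).smulRight u

variable {T}

@[simp]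
theorem traceTwist_apply (u v x : E) :
    traceTwist T u v x = x + u * algebraMap T E (Algebra.trace T E (v * x)) := by
  simp [traceTwist, Algebra.smul_def, mul_comm]

theorem traceTwist_injective {u v : E} (huv : Algebra.trace T E (-(u * v)) ≠ 1) :
    Injective (traceTwist T u v) := by
  refine (injective_iff_map_eq_zero _).2 fun x hx => ?_
  set τ := Algebra.trace T E (v * x) with hτ
  rw [traceTwist_apply, ← hτ] at hx
  have hx' : x = -(u * algebraMap T E τ) := by linear_combination hx
  have hτ_fix : τ = τ * Algebra.trace T E (-(u * v)) := by
    conv_lhs => rw [hτ, hx', show v * -(u * algebraMap T E τ) = τ • -(u * v) by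
      rw [Algebra.smul_def]; ring]
    rw [map_smul, smul_eq_mul]
  have hτ0 : τ = 0 := by
    have : τ * (1 - Algebra.trace T E (-(u * v))) = 0 := by linear_combination hτ_fix
    exact (mul_eq_zero.1 this).resolve_right (sub_ne_zero.2 huv.symm)
  simp [hx', hτ0]

theorem traceTwist_bijective [Finite E] {u v : E} (huv : Algebra.trace T E (-(u * v)) ≠ 1) :
    Bijective (traceTwist T u v) :=
  Finite.injective_iff_bijective.mp (traceTwist_injective huv)

end TraceTwist

section CcDifferential

variable {E : Type*} [Ring E]

noncomputable def ccDiffCount (F : E → E) (γ a b : E) : ℕ :=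
  Nat.card {x : E // F (γ * x + a) - γ * F x = b}

def ccDiffSpectrum (F : E → E) (γ : E) : Set ℕ :=
  {m | ∃ a b : E, (γ = 1 → a ≠ 0) ∧ m = ccDiffCount F γ a b}

theorem ccDiffCount_addEquiv_comp (L : E ≃+ E) {γ : E} (hL : ∀ y, L (γ * y) = γ * L y)
    (F : E → E) (a b : E) :
    ccDiffCount (L ∘ F) γ a (L b) = ccDiffCount F γ a b := by
  refine Nat.card_congr (Equiv.subtypeEquivRight fun x => ?_)
  simp only [comp_apply, ← hL, ← map_sub, L.injective.eq_iff]

theorem ccDiffSpectrum_addEquiv_comp (L : E ≃+ E) {γ : E} (hL : ∀ y, L (γ * y) = γ * L y)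
    (F : E → E) : ccDiffSpectrum (L ∘ F) γ = ccDiffSpectrum F γ := by
  ext m
  constructor
  · rintro ⟨a, b, ha, rfl⟩
    obtain ⟨b, rfl⟩ := L.surjective b
    exact ⟨a, b, ha, ccDiffCount_addEquiv_comp L hL F a b⟩
  · rintro ⟨a, b, ha, rfl⟩
    exact ⟨a, L b, ha, (ccDiffCount_addEquiv_comp L hL F a b).symm⟩

end CcDifferential

theorem trace_perturbation_preserves_cc_general
    (T E : Type) [Field T] [Field E] [Fintype E] [Algebra T E]
    (c : T)
    (F : E → E) (u v : E)
    (huv : Algebra.trace T E (-(u * v)) ≠ 1)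
    (G : E → E) (hG : ∀ x, G x = F x + u * algebraMap T E (Algebra.trace T E (v * F x)))
    (h : E → E) (hh : ∀ x, h x = x + u * algebraMap T E (Algebra.trace T E (v * x))) :
    (Function.Bijective h ∧ (∀ x y : E, h (x + y) = h x + h y) ∧
      ∀ (t₀ : T) (x : E), h (t₀ • x) = t₀ • h x) ∧
    sSup {m : ℕ | ∃ a b : E, (algebraMap T E c = 1 → a ≠ 0) ∧
        m = Nat.card {x : E // G (algebraMap T E c * x + a) - algebraMap T E c * G x = b}} =
    sSup {m : ℕ | ∃ a b : E, (algebraMap T E c = 1 → a ≠ 0) ∧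
        m = Nat.card {x : E // F (algebraMap T E c * x + a) - algebraMap T E c * F x = b}} := by
  obtain rfl : h = traceTwist T u v := funext fun x => by rw [hh, traceTwist_apply]
  obtain rfl : G = traceTwist T u v ∘ F := funext fun x => by rw [hG, comp_apply, traceTwist_apply]
  have hbij := traceTwist_bijective huv
  refine ⟨⟨hbij, map_add _, map_smul _⟩, ?_⟩
  let L : E ≃+ E := AddEquiv.ofBijective (traceTwist T u v) hbij
  have hL : ∀ y, L (algebraMap T E c * y) = algebraMap T E c * L y := fun y => by
    simp only [L, AddEquiv.ofBijective_apply, ← Algebra.smul_def, map_smul]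
  exact congrArg sSup (ccDiffSpectrum_addEquiv_comp L hL F)

/-- h(x) = x + u·Tr(vx) is an F_{q^t}-linear permutation of F_{q^s} when
Tr(−uv) ≠ 1, and G(x) = F(x) + u·Tr(vF(x)) has the same cc-differential uniformity as F. -/
theorem trace_perturbation_preserves_cc (p n t s : ℕ) (hp : p.Prime) (hn : 0 < n)
    (ht : 0 < t) (hts : t ∣ s)
    (T E : Type) [Field T] [Fintype T] [Field E] [Fintype E] [Algebra T E]
    (hT : Fintype.card T = (p ^ n) ^ t) (hE : Fintype.card E = (p ^ n) ^ s)
    (c : T) (hc : c ≠ 0)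
    (F : E → E) (u v : E)
    (huv : Algebra.trace T E (-(u * v)) ≠ 1)
    (G : E → E) (hG : ∀ x, G x = F x + u * algebraMap T E (Algebra.trace T E (v * F x)))
    (h : E → E) (hh : ∀ x, h x = x + u * algebraMap T E (Algebra.trace T E (v * x))) :
    (Function.Bijective h ∧ (∀ x y : E, h (x + y) = h x + h y) ∧
      ∀ (t₀ : T) (x : E), h (t₀ • x) = t₀ • h x) ∧
    sSup {m : ℕ | ∃ a b : E, (algebraMap T E c = 1 → a ≠ 0) ∧
        m = Nat.card {x : E // G (algebraMap T E c * x + a) - algebraMap T E c * G x = b}} =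
    sSup {m : ℕ | ∃ a b : E, (algebraMap T E c = 1 → a ≠ 0) ∧
        m = Nat.card {x : E // F (algebraMap T E c * x + a) - algebraMap T E c * F x = b}} :=
  trace_perturbation_preserves_cc_general T E c F u v huv G hG h hh
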